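/- If α₁,…,α_l are real numbers with α_i ≥ 2 for all i and l ≥ 2, then det T(α₁,…,α_{l−1}) < det T(α₁,…,α_{l−1},α_l). -/

import Mathlib

/-- The symmetric tridiagonal matrix with diagonal entries `α 0, …, α (n-1)` and
all sub- and superdiagonal entries equal to `1`. -/
def Tmat {R : Type*} [CommRing R] {n : ℕ} (α : Fin n → R) : Matrix (Fin n) (Fin n) R :=
  Matrix.of fun i j =>
    if (i : ℕ) = (j : ℕ) then α i
    else if (i : ℕ) + 1 = (j : ℕ) ∨ (j : ℕ) + 1 = (i : ℕ) then 1 else 0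

/-- The determinant of the tridiagonal matrix associated to a finite sequence. -/
def detT {R : Type*} [CommRing R] (L : List R) : R := (Tmat L.get).det

/-! Expanding along the last row gives the continuant recurrence
`D (k + 2) = α (k + 1) * D (k + 1) - D k` for the leading principal minors, with `D 0 = 1`.
If every `α i ≥ 2` and `D (k + 1) ≥ 0`, then `D (k + 2) - D (k + 1) ≥ D (k + 1) - D k`,
so the increments never drop below `D 1 - D 0 = α 0 - 1 ≥ 1`; this keeps `D ≥ 1` along
the induction. -/

section CommRing

variable {R : Type*} [CommRing R]

theorem Tmat_submatrix_castSucc {n : ℕ} (α : Fin (n + 1) → R) :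
    (Tmat α).submatrix Fin.castSucc Fin.castSucc = Tmat (α ∘ Fin.castSucc) := by
  ext i j
  simp [Tmat]

theorem det_Tmat_succ_succ {n : ℕ} (α : Fin (n + 2) → R) :
    (Tmat α).det = α (Fin.last _) * (Tmat (α ∘ Fin.castSucc)).det
      - (Tmat (α ∘ Fin.castSucc ∘ Fin.castSucc)).det := by
  rw [Matrix.det_succ_row _ (Fin.last _), Fin.sum_univ_castSucc, Fin.sum_univ_castSucc]
  have hrow : ∀ j : Fin n, Tmat α (Fin.last _) j.castSucc.castSucc = 0 := by
    intro j
    simp only [Tmat, Matrix.of_apply, Fin.val_last, Fin.val_castSucc]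
    rw [if_neg (by omega), if_neg (by omega)]
  have minor : ((Tmat α).submatrix Fin.castSucc (Fin.last n).castSucc.succAbove).det
      = (Tmat (α ∘ Fin.castSucc ∘ Fin.castSucc)).det := by
    rw [Matrix.det_succ_column _ (Fin.last _), Fin.sum_univ_castSucc]
    have hcol : ∀ i : Fin n, Tmat α i.castSucc.castSucc (Fin.last _) = 0 := by
      intro i
      simp only [Tmat, Matrix.of_apply, Fin.val_last, Fin.val_castSucc]
      rw [if_neg (by omega), if_neg (by omega)]
    have hone : Tmat α (Fin.last n).castSucc (Fin.last _) = 1 := by simp [Tmat]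
    have hsub : (Tmat α).submatrix (Fin.castSucc ∘ Fin.castSucc)
        ((Fin.last n).castSucc.succAbove ∘ Fin.castSucc) =
          Tmat (α ∘ Fin.castSucc ∘ Fin.castSucc) := by
      ext i j
      simp [Tmat, Fin.succAbove_of_castSucc_lt, Fin.castSucc_lt_last]
    simp [hcol, hone, hsub]
  simp only [hrow, mul_zero, zero_mul, Finset.sum_const_zero, zero_add, Fin.succAbove_last, minor,
    Tmat_submatrix_castSucc]
  simp [Tmat]
  ring

theorem detT_eq_det_Tmat_comp_cast {n : ℕ} (L : List R) (h : L.length = n) :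
    detT L = (Tmat (L.get ∘ Fin.cast h.symm)).det := by
  subst h
  rfl

end CommRing

section Ordered

variable {R : Type*} [CommRing R] [LinearOrder R] [IsStrictOrderedRing R]

theorem det_Tmat_castSucc_add_one_le_and_one_le {n : ℕ} (α : Fin (n + 1) → R)
    (hα : ∀ i, 2 ≤ α i) :
    (Tmat (α ∘ Fin.castSucc)).det + 1 ≤ (Tmat α).det ∧ 1 ≤ (Tmat α).det := by
  induction n with
  | zero =>
    have hdet : (Tmat α).det = α 0 := by simp [Matrix.det_unique, Tmat]
    have h0 := hα 0
    rw [Matrix.det_fin_zero, hdet]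
    constructor <;> linarith
  | succ n ih =>
    obtain ⟨hgap, hpos⟩ := ih (α ∘ Fin.castSucc) fun i => hα _
    rw [Function.comp_assoc] at hgap
    have hlast : 2 * (Tmat (α ∘ Fin.castSucc)).det ≤
        α (Fin.last _) * (Tmat (α ∘ Fin.castSucc)).det :=
      mul_le_mul_of_nonneg_right (hα _) (by linarith)
    rw [det_Tmat_succ_succ]
    constructor <;> linarith

theorem det_Tmat_castSucc_lt {n : ℕ} (α : Fin (n + 1) → R) (hα : ∀ i, 2 ≤ α i) :
    (Tmat (α ∘ Fin.castSucc)).det < (Tmat α).det :=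
  (lt_add_one _).trans_le (det_Tmat_castSucc_add_one_le_and_one_le α hα).1

end Ordered

theorem stmt5 (L : List ℝ) (hlen : 2 ≤ L.length) (h2 : ∀ x ∈ L, 2 ≤ x) :
    detT L.dropLast < detT L := by
  have hL : L.length = L.dropLast.length + 1 := by
    rw [List.length_dropLast]
    omega
  set α : Fin (L.dropLast.length + 1) → ℝ := L.get ∘ Fin.cast hL.symm
  have hdrop : L.dropLast.get = α ∘ Fin.castSucc := by
    funext i
    simp [α, List.getElem_dropLast]
  rw [detT_eq_det_Tmat_comp_cast L hL, detT, hdrop]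
  exact det_Tmat_castSucc_lt α fun i => h2 _ (List.get_mem _ _)
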